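/- For 0 ≤ k ≤ n−1 and φ ∈ C^k(X,ℝ), if there is ε > 0 such that ‖dφ‖² ≤ ε ‖φ‖², then ‖M⁺_k φ‖² ≤ (ε/(k+2)) ‖φ‖². -/

import Mathlib

/-!
Framework: a pure `n`-dimensional finite weighted simplicial complex, following
Kaufman–Oppenheim, "High Order Random Walks: Beyond Spectral Gap".

A complex is given by its finset of faces (finsets of a vertex type `V`) together with
a weight function `m`.  We index levels by **cardinality**: `X.K c` is the set of faces
with `c` elements, i.e. the set `X(k)` of `k`-dimensional faces for `k = c - 1`
(so `X(-1) = X.K 0`, and a pure `n`-dimensional complex has top level `X.K (n+1)`).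
-/

noncomputable section

open Finset

/-- The data of a weighted simplicial complex: a finite family of faces and a weight. -/
structure WSC (V : Type*) [DecidableEq V] where
  faces : Finset (Finset V)
  m : Finset V → ℝ

namespace WSC

variable {V : Type*} [DecidableEq V]

/-- `X.IsWSC n` : `X` is a pure `n`-dimensional finite weighted simplicial complex:
the faces form a nonempty downward-closed family, every face is contained in a face with
`n+1` elements (and no face has more), the weights are positive, and the weight of every
face of cardinality `≤ n` is the sum of the weights of the faces covering it. -/
def IsWSC (X : WSC V) (n : ℕ) : Prop :=
  ∅ ∈ X.faces ∧
  (∀ ⦃σ τ : Finset V⦄, σ ∈ X.faces → τ ⊆ σ → τ ∈ X.faces) ∧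
  (∀ ⦃σ⦄, σ ∈ X.faces → σ.card ≤ n + 1) ∧
  (∀ ⦃σ⦄, σ ∈ X.faces → ∃ η ∈ X.faces, σ ⊆ η ∧ η.card = n + 1) ∧
  (∀ ⦃σ⦄, σ ∈ X.faces → 0 < X.m σ) ∧
  (∀ ⦃τ⦄, τ ∈ X.faces → τ.card ≤ n →
    X.m τ = ∑ σ ∈ X.faces.filter (fun σ => τ ⊆ σ ∧ σ.card = τ.card + 1), X.m σ)

/-- `X.K c` : the faces with `c` elements, i.e. `X(c-1)` in dimension indexing. -/
def K (X : WSC V) (c : ℕ) : Finset (Finset V) := X.faces.filter (fun σ => σ.card = c)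

/-- The weighted inner product on cochains supported on the faces with `c` elements. -/
def inn (X : WSC V) (c : ℕ) (φ ψ : Finset V → ℝ) : ℝ :=
  ∑ σ ∈ X.K c, X.m σ * (φ σ * ψ σ)

/-- The squared norm of a cochain on the faces with `c` elements. -/
def normSq (X : WSC V) (c : ℕ) (φ : Finset V → ℝ) : ℝ := X.inn c φ φ

/-- The norm of a cochain on the faces with `c` elements. -/
def norm (X : WSC V) (c : ℕ) (φ : Finset V → ℝ) : ℝ := Real.sqrt (X.normSq c φ)

/-- `X.cochainZero c φ` : φ belongs to `C^{c-1}_0 (X, ℝ)`, i.e. it is orthogonal to the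
constant functions at level `c`. -/
def cochainZero (X : WSC V) (c : ℕ) (φ : Finset V → ℝ) : Prop :=
  ∑ σ ∈ X.K c, X.m σ * φ σ = 0

/-- The signless differential, from cochains at level `c` to cochains at level `c+1`:
`(d φ)(σ) = ∑_{τ ∈ X(c-1), τ ⊂ σ} φ(τ)`. -/
def d (X : WSC V) (c : ℕ) (φ : Finset V → ℝ) : Finset V → ℝ :=
  fun σ => ∑ τ ∈ (X.K c).filter (fun τ => τ ⊆ σ), φ τ

/-- The (explicit formula for the) adjoint of the signless differential, from cochains at
level `c+1` to cochains at level `c`: `(d* ψ)(τ) = ∑_{σ ⊇ τ} (m σ / m τ) ψ(σ)`. -/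
def dStar (X : WSC V) (c : ℕ) (ψ : Finset V → ℝ) : Finset V → ℝ :=
  fun τ => ∑ σ ∈ (X.K (c + 1)).filter (fun σ => τ ⊆ σ), (X.m σ / X.m τ) * ψ σ

/-- The (lazy) upper random walk operator `M⁺` on cochains at level `c`
(i.e. on `k`-cochains for `k = c-1`; note `k + 2 = c + 1`). -/
def Mup (X : WSC V) (c : ℕ) (φ : Finset V → ℝ) : Finset V → ℝ :=
  fun τ => (1 / ((c : ℝ) + 1)) * φ τ +
    ∑ τ' ∈ (X.K c).filter (fun τ' => τ ∪ τ' ∈ X.K (c + 1)),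
      (X.m (τ ∪ τ') / (((c : ℝ) + 1) * X.m τ)) * φ τ'

/-- The lower random walk operator `M⁻` on cochains at level `c`
(i.e. on `k`-cochains for `k = c-1`; note `k + 1 = c`). -/
def Mdown (X : WSC V) (c : ℕ) (φ : Finset V → ℝ) : Finset V → ℝ :=
  fun τ => (∑ η ∈ (X.K (c - 1)).filter (fun η => η ⊆ τ), X.m τ / ((c : ℝ) * X.m η)) * φ τ +
    ∑ τ' ∈ (X.K c).filter (fun τ' => τ' ≠ τ ∧ τ ∩ τ' ∈ X.K (c - 1)),
      (X.m τ' / ((c : ℝ) * X.m (τ ∩ τ'))) * φ τ'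

/-- The non-lazy upper random walk operator `(M')⁺ = ((k+2)/(k+1)) M⁺ - (1/(k+1)) I`
on cochains at level `c = k+1`. -/
def Mup' (X : WSC V) (c : ℕ) (φ : Finset V → ℝ) : Finset V → ℝ :=
  fun τ => (((c : ℝ) + 1) / (c : ℝ)) * X.Mup c φ τ - (1 / (c : ℝ)) * φ τ

/-- The link `X_τ` of a face `τ`, with the induced weight `m_τ (η) = m (τ ∪ η)`. -/
def link (X : WSC V) (τ : Finset V) : WSC V where
  faces := X.faces.filter (fun η => η ∩ τ = ∅ ∧ τ ∪ η ∈ X.faces)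
  m := fun η => X.m (τ ∪ η)

/-- The localization `φ_τ (η) = φ (τ ∪ η)` of a cochain `φ` to the link of `τ`. -/
def localize (φ : Finset V → ℝ) (τ : Finset V) : Finset V → ℝ := fun η => φ (τ ∪ η)

/-- The underlying graph (1-skeleton) of a complex. -/
def skeleton (Y : WSC V) : SimpleGraph {v : V // ({v} : Finset V) ∈ Y.faces} where
  Adj u w := u ≠ w ∧ ({(u : V), (w : V)} : Finset V) ∈ Y.faces
  symm := by
    constructor
    intro u w h
    refine ⟨h.1.symm, ?_⟩
    rw [Finset.pair_comm]
    exact h.2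
  loopless := by constructor; intro u h; exact h.1 rfl

/-- All links of `X` of dimension `≥ 1` (including `X` itself, as the link of `∅`)
have a connected underlying graph. -/
def LinksConnected (X : WSC V) (n : ℕ) : Prop :=
  ∀ c < n, ∀ τ ∈ X.K c, (X.link τ).skeleton.Connected

/-- The second largest eigenvalue of the self-adjoint operator `(M')⁺₀` on `C⁰(Y, ℝ)`,
via its Rayleigh-quotient characterization over the orthogonal complement of the
constant functions (the top eigenfunction). -/
def secondEig (Y : WSC V) : ℝ :=
  sSup {r : ℝ | ∃ ψ : Finset V → ℝ, Y.normSq 1 ψ ≠ 0 ∧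
    (∑ v ∈ Y.K 1, Y.m v * ψ v) = 0 ∧ r = Y.inn 1 (Y.Mup' 1 ψ) ψ / Y.normSq 1 ψ}

/-- The smallest eigenvalue of the self-adjoint operator `(M')⁺₀` on `C⁰(Y, ℝ)`,
via its Rayleigh-quotient characterization. -/
def smallestEig (Y : WSC V) : ℝ :=
  sInf {r : ℝ | ∃ ψ : Finset V → ℝ, Y.normSq 1 ψ ≠ 0 ∧
    r = Y.inn 1 (Y.Mup' 1 ψ) ψ / Y.normSq 1 ψ}

/-- `μ_k = max_{τ ∈ X(k-1)} μ_τ` where `μ_τ` is the second largest eigenvalue of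
`(M')⁺_{τ,0}`; faces `τ ∈ X(k-1)` have `k` elements. -/
def mu (X : WSC V) (k : ℕ) : ℝ :=
  sSup {r : ℝ | ∃ τ ∈ X.K k, r = (X.link τ).secondEig}

/-- `ν_k = min_{τ ∈ X(k-1)} ν_τ` where `ν_τ` is the smallest eigenvalue of
`(M')⁺_{τ,0}`; faces `τ ∈ X(k-1)` have `k` elements. -/
def nu (X : WSC V) (k : ℕ) : ℝ :=
  sInf {r : ℝ | ∃ τ ∈ X.K k, r = (X.link τ).smallestEig}

/-- `X` is a one-sided `λ`-local spectral expander: `μ_k ≤ λ` for every `0 ≤ k ≤ n-1`. -/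
def OneSided (X : WSC V) (n : ℕ) (lam : ℝ) : Prop := ∀ k < n, X.mu k ≤ lam

/-- `X` is a two-sided `λ`-local spectral expander: `μ_k ≤ λ` and `ν_k ≥ -λ`
for every `0 ≤ k ≤ n-1`. -/
def TwoSided (X : WSC V) (n : ℕ) (lam : ℝ) : Prop :=
  ∀ k < n, X.mu k ≤ lam ∧ -lam ≤ X.nu k

end WSC

/-!
On faces with `c` elements, `(c + 1) • M⁺ = d* ∘ d`, where `d*` is the weighted adjoint of the
signless differential: expanding `d* (d φ) τ`, the term `τ' = τ` contributes `φ τ` because the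
weight of `τ` is the total weight of its cofaces, and every other `τ'` contributes through the
single coface `τ ∪ τ'`. By Cauchy–Schwarz against the same weight balance,
`‖d* ψ‖² ≤ (c + 1) ‖ψ‖²`, the factor `c + 1` counting the facets of a face with `c + 1`
elements. Hence `‖M⁺ φ‖² = ‖d* d φ‖² / (c + 1)² ≤ ‖d φ‖² / (c + 1)`.
-/

theorem Finset.union_eq_of_subset_of_card_eq_succ {α : Type*} [DecidableEq α]
    {s t u : Finset α} {c : ℕ} (hsu : s ⊆ u) (htu : t ⊆ u) (hst : s ≠ t)
    (hs : s.card = c) (ht : t.card = c) (hu : u.card = c + 1) : s ∪ t = u := by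
  have hts : ¬t ⊆ s := fun h => hst (Finset.eq_of_subset_of_card_le h (by omega)).symm
  have hlt : s.card < (s ∪ t).card :=
    Finset.card_lt_card (Finset.ssubset_iff_subset_ne.2
      ⟨Finset.subset_union_left, fun h => hts (h ▸ Finset.subset_union_right)⟩)
  exact Finset.eq_of_subset_of_card_le (Finset.union_subset hsu htu) (by omega)

namespace WSC

variable {V : Type*} [DecidableEq V] {X : WSC V} {n c : ℕ}

theorem mem_K {σ : Finset V} : σ ∈ X.K c ↔ σ ∈ X.faces ∧ σ.card = c := Finset.mem_filter

namespace IsWSC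

theorem mem_faces_of_subset (hX : X.IsWSC n) {σ τ : Finset V} (hσ : σ ∈ X.faces)
    (hτσ : τ ⊆ σ) : τ ∈ X.faces :=
  hX.2.1 hσ hτσ

theorem m_pos (hX : X.IsWSC n) {σ : Finset V} (hσ : σ ∈ X.faces) : 0 < X.m σ :=
  hX.2.2.2.2.1 hσ

theorem sum_m_cofaces (hX : X.IsWSC n) (hc : c ≤ n) {τ : Finset V} (hτ : τ ∈ X.K c) :
    ∑ σ ∈ (X.K (c + 1)).filter (τ ⊆ ·), X.m σ = X.m τ := by
  obtain ⟨hτf, hτc⟩ := mem_K.1 hτ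
  rw [hX.2.2.2.2.2 hτf (hτc ▸ hc), K, Finset.filter_filter, hτc]
  simp only [and_comm]

theorem sum_K_sum_cofaces (hX : X.IsWSC n) (f : Finset V → ℝ) :
    ∑ τ ∈ X.K c, ∑ σ ∈ (X.K (c + 1)).filter (τ ⊆ ·), f σ
      = ((c : ℝ) + 1) * ∑ σ ∈ X.K (c + 1), f σ := by
  have hswap : ∀ τ σ, τ ∈ X.K c ∧ σ ∈ (X.K (c + 1)).filter (τ ⊆ ·) ↔
      τ ∈ σ.powersetCard c ∧ σ ∈ X.K (c + 1) := by
    intro τ σ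
    simp only [Finset.mem_filter, mem_K, Finset.mem_powersetCard]
    exact ⟨fun h => ⟨⟨h.2.2, h.1.2⟩, h.2.1⟩,
      fun h => ⟨⟨hX.mem_faces_of_subset h.2.1 h.1.1, h.1.2⟩, h.2, h.1.1⟩⟩
  rw [Finset.sum_comm' hswap, Finset.mul_sum]
  refine Finset.sum_congr rfl fun σ hσ => ?_
  rw [Finset.sum_const, Finset.card_powersetCard, (mem_K.1 hσ).2, Nat.choose_succ_self_right,
    nsmul_eq_mul]
  push_cast
  ring

end IsWSC

theorem sum_cofaces_sum_erase_eq {τ : Finset V} (hτ : τ.card = c)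
    (g : Finset V → Finset V → ℝ) :
    ∑ σ ∈ (X.K (c + 1)).filter (τ ⊆ ·), ∑ τ' ∈ ((X.K c).filter (· ⊆ σ)).erase τ, g σ τ'
      = ∑ τ' ∈ (X.K c).filter (fun τ' => τ ∪ τ' ∈ X.K (c + 1)), g (τ ∪ τ') τ' := by
  have hswap : ∀ σ τ',
      σ ∈ (X.K (c + 1)).filter (τ ⊆ ·) ∧ τ' ∈ ((X.K c).filter (· ⊆ σ)).erase τ ↔
      σ ∈ ({τ ∪ τ'} : Finset _) ∧ τ' ∈ (X.K c).filter (fun τ' => τ ∪ τ' ∈ X.K (c + 1)) := by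
    intro σ τ'
    simp only [Finset.mem_filter, Finset.mem_erase, Finset.mem_singleton]
    constructor
    · rintro ⟨⟨hσ, hτσ⟩, hne, hτ', hτ'σ⟩
      have hστ : τ ∪ τ' = σ := Finset.union_eq_of_subset_of_card_eq_succ hτσ hτ'σ (Ne.symm hne)
        hτ (mem_K.1 hτ').2 (mem_K.1 hσ).2
      exact ⟨hστ.symm, hτ', hστ ▸ hσ⟩
    · rintro ⟨rfl, hτ', hσ⟩
      refine ⟨⟨hσ, Finset.subset_union_left⟩, fun hτ'τ => ?_, hτ', Finset.subset_union_right⟩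
      have := (mem_K.1 hσ).2
      rw [hτ'τ, Finset.union_self] at this
      omega
  rw [Finset.sum_comm' hswap]
  simp only [Finset.sum_singleton]

theorem IsWSC.dStar_d_apply (hX : X.IsWSC n) (hc : c ≤ n) (φ : Finset V → ℝ) {τ : Finset V}
    (hτ : τ ∈ X.K c) : X.dStar c (X.d c φ) τ = ((c : ℝ) + 1) * X.Mup c φ τ := by
  have hmτ : X.m τ ≠ 0 := (hX.m_pos (mem_K.1 hτ).1).ne'
  have hsplit : ∀ σ ∈ (X.K (c + 1)).filter (τ ⊆ ·), X.m σ / X.m τ * X.d c φ σ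
      = X.m σ / X.m τ * φ τ + ∑ τ' ∈ ((X.K c).filter (· ⊆ σ)).erase τ, X.m σ / X.m τ * φ τ' := by
    intro σ hσ
    rw [d, ← Finset.add_sum_erase _ _ (Finset.mem_filter.2 ⟨hτ, (Finset.mem_filter.1 hσ).2⟩),
      mul_add, Finset.mul_sum]
  have hdiag : ∑ σ ∈ (X.K (c + 1)).filter (τ ⊆ ·), X.m σ / X.m τ * φ τ = φ τ := by
    rw [← Finset.sum_mul, ← Finset.sum_div, hX.sum_m_cofaces hc hτ, div_self hmτ, one_mul]
  rw [dStar, Finset.sum_congr rfl hsplit, Finset.sum_add_distrib, hdiag,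
    sum_cofaces_sum_erase_eq (mem_K.1 hτ).2, Mup, mul_add, Finset.mul_sum]
  congr 1
  · field_simp
  · refine Finset.sum_congr rfl fun τ' _ => ?_
    field_simp

theorem IsWSC.m_mul_dStar_sq_le (hX : X.IsWSC n) (hc : c ≤ n) (ψ : Finset V → ℝ) {τ : Finset V}
    (hτ : τ ∈ X.K c) :
    X.m τ * X.dStar c ψ τ ^ 2 ≤ ∑ σ ∈ (X.K (c + 1)).filter (τ ⊆ ·), X.m σ * ψ σ ^ 2 := by
  set F := (X.K (c + 1)).filter (τ ⊆ ·)
  have hmF : ∀ σ ∈ F, 0 < X.m σ := fun σ hσ => hX.m_pos (mem_K.1 (Finset.mem_filter.1 hσ).1).1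
  have hdStar : X.dStar c ψ τ = (∑ σ ∈ F, X.m σ * ψ σ) / ∑ σ ∈ F, X.m σ := by
    rw [hX.sum_m_cofaces hc hτ, dStar, Finset.sum_div]
    exact Finset.sum_congr rfl fun σ _ => div_mul_eq_mul_div _ _ _
  calc X.m τ * X.dStar c ψ τ ^ 2 = (∑ σ ∈ F, X.m σ * ψ σ) ^ 2 / ∑ σ ∈ F, X.m σ := by
        rw [hdStar, hX.sum_m_cofaces hc hτ]
        field_simp [(hX.m_pos (mem_K.1 hτ).1).ne']
    _ ≤ ∑ σ ∈ F, (X.m σ * ψ σ) ^ 2 / X.m σ := Finset.sq_sum_div_le_sum_sq_div F _ hmF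
    _ = ∑ σ ∈ F, X.m σ * ψ σ ^ 2 := Finset.sum_congr rfl fun σ hσ => by
        field_simp [(hmF σ hσ).ne']

theorem IsWSC.normSq_dStar_le (hX : X.IsWSC n) (hc : c ≤ n) (ψ : Finset V → ℝ) :
    X.normSq c (X.dStar c ψ) ≤ ((c : ℝ) + 1) * X.normSq (c + 1) ψ := by
  simp only [normSq, inn, ← sq]
  rw [← hX.sum_K_sum_cofaces]
  exact Finset.sum_le_sum fun τ hτ => hX.m_mul_dStar_sq_le hc ψ hτ

theorem IsWSC.normSq_Mup_le (hX : X.IsWSC n) (hc : c ≤ n) (φ : Finset V → ℝ) :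
    X.normSq c (X.Mup c φ) ≤ X.normSq (c + 1) (X.d c φ) / ((c : ℝ) + 1) := by
  have hMup : X.normSq c (X.Mup c φ) = X.normSq c (X.dStar c (X.d c φ)) / ((c : ℝ) + 1) ^ 2 := by
    simp only [normSq, inn, Finset.sum_div]
    refine Finset.sum_congr rfl fun τ hτ => ?_
    rw [hX.dStar_d_apply hc φ hτ]
    field_simp
  calc X.normSq c (X.Mup c φ)
        ≤ ((c : ℝ) + 1) * X.normSq (c + 1) (X.d c φ) / ((c : ℝ) + 1) ^ 2 := by
        rw [hMup]
        gcongr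
        exact hX.normSq_dStar_le hc _
    _ = X.normSq (c + 1) (X.d c φ) / ((c : ℝ) + 1) := by
        field_simp

end WSC

open WSC
theorem Mup_normSq_le_of_d_normSq_le_general {V : Type*} [DecidableEq V] (X : WSC V) (n : ℕ)
    (hX : X.IsWSC n) (k : ℕ) (hk : k < n) (φ : Finset V → ℝ) (ε : ℝ)
    (h : X.normSq (k + 2) (X.d (k + 1) φ) ≤ ε * X.normSq (k + 1) φ) :
    X.normSq (k + 1) (X.Mup (k + 1) φ) ≤ (ε / ((k : ℝ) + 2)) * X.normSq (k + 1) φ := by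
  have hk2 : ((k + 1 : ℕ) : ℝ) + 1 = (k : ℝ) + 2 := by push_cast; ring
  calc X.normSq (k + 1) (X.Mup (k + 1) φ) ≤ X.normSq (k + 2) (X.d (k + 1) φ) / ((k : ℝ) + 2) :=
        hk2 ▸ hX.normSq_Mup_le hk φ
    _ ≤ ε * X.normSq (k + 1) φ / ((k : ℝ) + 2) := by gcongr
    _ = ε / ((k : ℝ) + 2) * X.normSq (k + 1) φ := by ring

/-- For `0 ≤ k ≤ n-1` and `φ ∈ C^k(X,ℝ)`, if there is `ε > 0` with
`‖dφ‖² ≤ ε ‖φ‖²`, then `‖M⁺_k φ‖² ≤ (ε/(k+2)) ‖φ‖²`.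
(Cardinality level `k + 1`.) -/
theorem Mup_normSq_le_of_d_normSq_le {V : Type*} [DecidableEq V] (X : WSC V) (n : ℕ)
    (hX : X.IsWSC n) (k : ℕ) (hk : k < n) (φ : Finset V → ℝ) (ε : ℝ) (hε : 0 < ε)
    (h : X.normSq (k + 2) (X.d (k + 1) φ) ≤ ε * X.normSq (k + 1) φ) :
    X.normSq (k + 1) (X.Mup (k + 1) φ) ≤ (ε / ((k : ℝ) + 2)) * X.normSq (k + 1) φ :=
  Mup_normSq_le_of_d_normSq_le_general X n hX k hk φ ε h
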